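/- If the bit-error probabilities are sorted in nonincreasing reliability order (P(1) ≤ P(2) ≤ … ≤ P(k), all in (0,1/2)), then among error patterns of a fixed Hamming weight w, the pattern supported on the w least reliable positions {k−w+1, …, k} maximizes P(e). -/
import Mathlib

theorem least_reliable_support_maximizes_probability
    (k : ℕ) (P : Fin k → ℝ) (hP : ∀ i, P i ∈ Set.Ioo (0 : ℝ) (1 / 2))
    (hmono : Monotone P)
    (W : (Fin k → ZMod 2) → ℝ)
    (hW : ∀ e, W e = ∏ i, if e i = 1 then P i else 1 - P i)
    (e : Fin k → ZMod 2) (w : ℕ)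
    (hw : w = (Finset.univ.filter fun i => e i = 1).card) :
    W e ≤ W (fun i => if k - w ≤ (i : ℕ) then 1 else 0) := by
  classical
  have hP0 : ∀ i, 0 < P i := fun i => (hP i).1
  have hP1 : ∀ i, 0 < 1 - P i := fun i => by have := (hP i).2; linarith
  set S : Finset (Fin k) := Finset.univ.filter (fun i => e i = 1) with hS
  set T : Finset (Fin k) := Finset.univ.filter (fun i => k - w ≤ (i : ℕ)) with hT
  -- key rewriting of W as split product
  have hsplit : ∀ (A : Finset (Fin k)) (f : Fin k → ZMod 2),
      (Finset.univ.filter (fun i => f i = 1)) = A →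
      W f = (∏ i ∈ A, P i) * ∏ i ∈ Aᶜ, (1 - P i) := by
    intro A f hA
    rw [hW, Finset.prod_ite, hA]
    congr 1
    rw [Finset.filter_not, hA, ← Finset.compl_eq_univ_sdiff]
  have hWe : W e = (∏ i ∈ S, P i) * ∏ i ∈ Sᶜ, (1 - P i) := hsplit S e rfl
  have hWt : W (fun i => if k - w ≤ (i : ℕ) then 1 else 0)
      = (∏ i ∈ T, P i) * ∏ i ∈ Tᶜ, (1 - P i) := by
    apply hsplit
    ext i
    by_cases h : k - w ≤ (i : ℕ) <;> simp [h, hT]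
  -- cards
  have hwk : w ≤ k := by
    rw [hw]; simpa using Finset.card_filter_le Finset.univ (fun i => e i = 1)
  have hTcard : T.card = w := by
    have h1 : (Finset.univ.filter fun i : Fin k => (i:ℕ) < k - w).card = k - w := by
      rw [Finset.card_filter,
        Fin.sum_univ_eq_sum_range (fun i => if i < k - w then 1 else 0),
        ← Finset.card_filter]
      have : (Finset.range k).filter (fun i => i < k - w) = Finset.range (k - w) := by
        ext i; simp; omega
      rw [this, Finset.card_range]
    have h2 : T = (Finset.univ.filter fun i : Fin k => (i:ℕ) < k - w)ᶜ := by
      ext i; simp [hT]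
    rw [h2, Finset.card_compl, h1]
    simp; omega
  have hScard : S.card = w := hw.symm
  have hcard : (S \ T).card = (T \ S).card :=
    Finset.card_sdiff_comm (hScard.trans hTcard.symm)
  -- decompose products
  have hSd : (∏ i ∈ S, P i) = (∏ i ∈ S ∩ T, P i) * ∏ i ∈ S \ T, P i :=
    (Finset.prod_inter_mul_prod_diff S T P).symm
  have hTd : (∏ i ∈ T, P i) = (∏ i ∈ S ∩ T, P i) * ∏ i ∈ T \ S, P i := by
    rw [Finset.inter_comm]
    exact (Finset.prod_inter_mul_prod_diff T S P).symm
  have hScd : (∏ i ∈ Sᶜ, (1 - P i))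
      = (∏ i ∈ Sᶜ ∩ Tᶜ, (1 - P i)) * ∏ i ∈ T \ S, (1 - P i) := by
    have h : Sᶜ \ Tᶜ = T \ S := by ext i; simp [and_comm]
    rw [← h]
    exact (Finset.prod_inter_mul_prod_diff Sᶜ Tᶜ _).symm
  have hTcd : (∏ i ∈ Tᶜ, (1 - P i))
      = (∏ i ∈ Sᶜ ∩ Tᶜ, (1 - P i)) * ∏ i ∈ S \ T, (1 - P i) := by
    have h : Tᶜ \ Sᶜ = S \ T := by ext i; simp [and_comm]
    rw [← h, Finset.inter_comm]
    exact (Finset.prod_inter_mul_prod_diff Tᶜ Sᶜ _).symm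
  -- core inequality
  have key : (∏ i ∈ S \ T, P i) * ∏ i ∈ T \ S, (1 - P i)
      ≤ (∏ i ∈ T \ S, P i) * ∏ i ∈ S \ T, (1 - P i) := by
    have σ : (S \ T : Finset (Fin k)) ≃ (T \ S : Finset (Fin k)) :=
      Finset.equivOfCardEq hcard
    have hle : ∀ a : (S \ T : Finset (Fin k)), P a.1 ≤ P (σ a).1 := by
      intro a
      have ha : ¬ (k - w ≤ (a.1 : ℕ)) := by
        have := a.2; rw [Finset.mem_sdiff] at this
        simpa [hT] using this.2
      have hb : k - w ≤ ((σ a).1 : ℕ) := by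
        have := (σ a).2; rw [Finset.mem_sdiff] at this
        simpa [hT] using this.1
      exact hmono (by rw [Fin.le_def]; omega)
    calc (∏ i ∈ S \ T, P i) * ∏ i ∈ T \ S, (1 - P i)
        = ∏ a : (S \ T : Finset (Fin k)), P a.1 * (1 - P (σ a).1) := by
          rw [Finset.prod_mul_distrib]
          congr 1
          · rw [Finset.prod_coe_sort]
          · rw [← Finset.prod_coe_sort (T \ S) (fun i => 1 - P i),
              ← Equiv.prod_comp σ (fun b : (T \ S : Finset (Fin k)) => 1 - P b.1)]
      _ ≤ ∏ a : (S \ T : Finset (Fin k)), P (σ a).1 * (1 - P a.1) := by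
          apply Finset.prod_le_prod
          · intro a _
            exact mul_nonneg (hP0 _).le (hP1 _).le
          · intro a _
            have h1 := hle a
            have h2 := hP0 a.1
            have h3 := hP1 (σ a).1
            nlinarith
      _ = (∏ i ∈ T \ S, P i) * ∏ i ∈ S \ T, (1 - P i) := by
          rw [Finset.prod_mul_distrib]
          congr 1
          · rw [← Finset.prod_coe_sort (T \ S) P,
              ← Equiv.prod_comp σ (fun b : (T \ S : Finset (Fin k)) => P b.1)]
          · exact Finset.prod_coe_sort (S \ T) (fun i => 1 - P i)
  -- combine
  rw [hWe, hWt, hSd, hTd, hScd, hTcd]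
  have hC : 0 ≤ (∏ i ∈ S ∩ T, P i) * ∏ i ∈ Sᶜ ∩ Tᶜ, (1 - P i) :=
    mul_nonneg (Finset.prod_nonneg fun i _ => (hP0 i).le)
      (Finset.prod_nonneg fun i _ => (hP1 i).le)
  calc ((∏ i ∈ S ∩ T, P i) * ∏ i ∈ S \ T, P i) *
        ((∏ i ∈ Sᶜ ∩ Tᶜ, (1 - P i)) * ∏ i ∈ T \ S, (1 - P i))
      = ((∏ i ∈ S ∩ T, P i) * ∏ i ∈ Sᶜ ∩ Tᶜ, (1 - P i)) *
        ((∏ i ∈ S \ T, P i) * ∏ i ∈ T \ S, (1 - P i)) := by ring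
    _ ≤ ((∏ i ∈ S ∩ T, P i) * ∏ i ∈ Sᶜ ∩ Tᶜ, (1 - P i)) *
        ((∏ i ∈ T \ S, P i) * ∏ i ∈ S \ T, (1 - P i)) :=
        mul_le_mul_of_nonneg_left key hC
    _ = ((∏ i ∈ S ∩ T, P i) * ∏ i ∈ T \ S, P i) *
        ((∏ i ∈ Sᶜ ∩ Tᶜ, (1 - P i)) * ∏ i ∈ S \ T, (1 - P i)) := by ring
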